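/- arXiv:2009.09711 — 3 statements merged into one kernel-verified Lean document; each statement's English description precedes it below -/
import Mathlib

section
/- Let (α_n) be a strictly increasing positive sequence (for n ≥ 1, with α_0 = 0) and (γ_n) a positive strictly decreasing sequence such that α_n + γ_n ≤ 1 for all n, and suppose (α_n - α_{n-1})/(α_n γ_{n-1} - α_{n-1} γ_n) ≤ (α_{n+1} γ_n - α_n γ_{n+1})/(γ_n - γ_{n+1}) for all n ≥ 1, and γ_0 - γ_1 ≤ α_1 γ_0². Define g_0 = 1/γ_0 and g_n = (1/γ_n)(1 - α_n/g_{n-1}). Then 1 ≤ g_n ≤ (α_{n+1} γ_n - α_n γ_{n+1})/(γ_n - γ_{n+1}) for all n ≥ 0. -/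
/-! Both bounds propagate along the recursion `g (n+1) = (1 - α (n+1) / g n) / γ (n+1)`, whose
right-hand side is increasing in `g n`. The lower bound survives because `α + γ ≤ 1`. For the
upper bound `B n := (α (n+1) γ n - α n γ (n+1)) / (γ n - γ (n+1))`, substituting `B n` for `g n`
gives exactly `(α (n+1) - α n) / (α (n+1) γ n - α n γ (n+1))`, which the cross condition bounds by `B (n+1)`;
the initial condition is the upper bound at `n = 0`. -/

lemma cross_sub_pos {a a' c c' : ℝ} (ha' : 0 ≤ a') (haa' : a' < a) (hc : 0 < c) (hcc' : c < c') :
    0 < a * c' - a' * c := by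
  nlinarith

lemma one_le_one_div_mul_one_sub_div {a c x : ℝ} (ha : 0 ≤ a) (hc : 0 < c) (hac : a + c ≤ 1)
    (hx : 1 ≤ x) : 1 ≤ 1 / c * (1 - a / x) := by
  have : a / x ≤ a := div_le_self ha hx
  rw [one_div_mul_eq_div, le_div_iff₀ hc]
  linarith

lemma one_div_mul_one_sub_div_le {a a' c c' x : ℝ} (ha : 0 ≤ a) (hc : 0 < c)
    (hN : 0 < a * c' - a' * c) (hx : 0 < x) (hxB : x ≤ (a * c' - a' * c) / (c' - c)) :
    1 / c * (1 - a / x) ≤ (a - a') / (a * c' - a' * c) :=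
  calc 1 / c * (1 - a / x) ≤ 1 / c * (1 - a / ((a * c' - a' * c) / (c' - c))) := by gcongr
    _ = (a - a') / (a * c' - a' * c) := by
      rw [div_div_eq_mul_div, one_sub_div hN.ne', one_div_mul_eq_div, div_div,
        eq_div_iff (by positivity)]
      field_simp
      ring

theorem stmt_1_general (α γ g : ℕ → ℝ)
    (hα0 : α 0 = 0)
    (hαmono : ∀ n, α n < α (n + 1))
    (hγpos : ∀ n, 0 < γ n)
    (hγmono : ∀ n, γ (n + 1) < γ n)
    (hsum : ∀ n, α n + γ n ≤ 1)
    (hcross : ∀ n ≥ 1,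
      (α n - α (n - 1)) / (α n * γ (n - 1) - α (n - 1) * γ n) ≤
        (α (n + 1) * γ n - α n * γ (n + 1)) / (γ n - γ (n + 1)))
    (hinit : γ 0 - γ 1 ≤ α 1 * (γ 0) ^ 2)
    (hg0 : g 0 = 1 / γ 0)
    (hg : ∀ n ≥ 1, g n = (1 / γ n) * (1 - α n / g (n - 1))) :
    ∀ n, 1 ≤ g n ∧ g n ≤ (α (n + 1) * γ n - α n * γ (n + 1)) / (γ n - γ (n + 1)) := by
  have hαnn (n : ℕ) : 0 ≤ α n :=
    hα0 ▸ (strictMono_nat_of_lt_succ hαmono).monotone n.zero_le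
  have hN (n : ℕ) : 0 < α (n + 1) * γ n - α n * γ (n + 1) :=
    cross_sub_pos (hαnn n) (hαmono n) (hγpos _) (hγmono n)
  intro n
  induction n with
  | zero =>
    have hγ0 : γ 0 ≤ 1 := by simpa [hα0] using hsum 0
    rw [hg0, hα0, zero_mul, sub_zero, div_le_div_iff₀ (hγpos 0) (sub_pos.2 (hγmono 0))]
    exact ⟨(one_le_div (hγpos 0)).2 hγ0, by nlinarith⟩
  | succ n ih =>
    rw [hg (n + 1) n.succ_pos, Nat.add_sub_cancel]
    refine ⟨one_le_one_div_mul_one_sub_div (hαnn _) (hγpos _) (hsum _) ih.1, ?_⟩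
    calc _ ≤ (α (n + 1) - α n) / (α (n + 1) * γ n - α n * γ (n + 1)) :=
          one_div_mul_one_sub_div_le (hαnn _) (hγpos _) (hN n) (one_pos.trans_le ih.1) ih.2
      _ ≤ _ := by simpa using hcross (n + 1) n.succ_pos

theorem stmt_1 (α γ g : ℕ → ℝ)
    (hα0 : α 0 = 0)
    (hαpos : ∀ n ≥ 1, 0 < α n)
    (hαmono : ∀ n, α n < α (n + 1))
    (hγpos : ∀ n, 0 < γ n)
    (hγmono : ∀ n, γ (n + 1) < γ n)
    (hsum : ∀ n, α n + γ n ≤ 1)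
    (hcross : ∀ n ≥ 1,
      (α n - α (n - 1)) / (α n * γ (n - 1) - α (n - 1) * γ n) ≤
        (α (n + 1) * γ n - α n * γ (n + 1)) / (γ n - γ (n + 1)))
    (hinit : γ 0 - γ 1 ≤ α 1 * (γ 0) ^ 2)
    (hg0 : g 0 = 1 / γ 0)
    (hg : ∀ n ≥ 1, g n = (1 / γ n) * (1 - α n / g (n - 1))) :
    ∀ n, 1 ≤ g n ∧ g n ≤ (α (n + 1) * γ n - α n * γ (n + 1)) / (γ n - γ (n + 1)) :=
  stmt_1_general α γ g hα0 hαmono hγpos hγmono hsum hcross hinit hg0 hg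
end

section
/- Under the assumptions of the previous lemma (strictly increasing α_n with α_0 = 0, strictly decreasing positive γ_n, α_n + γ_n ≤ 1, the cross-ratio inequality (α_n - α_{n-1})/(α_n γ_{n-1} - α_{n-1} γ_n) ≤ (α_{n+1} γ_n - α_n γ_{n+1})/(γ_n - γ_{n+1}) for n ≥ 1, and γ_0 - γ_1 ≤ α_1 γ_0²), the sequence g_n defined by g_0 = 1/γ_0, g_n = (1/γ_n)(1 - α_n/g_{n-1}) is nonincreasing: g_{n+1} ≤ g_n for all n ≥ 0. -/
/-!
Write `f_k x = (1 / γ_k) (1 - α_k / x)`, so that `g_{n+1} = f_{n+1} (g_n)`, and let `M_k` be the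
crossing point of `f_k` and `f_{k+1}`, below which `f_{k+1} ≤ f_k`. One shows by induction that
`1 ≤ g_n ≤ M_n`: the base case is `γ_0 - γ_1 ≤ α_1 γ_0²`, and the step uses that `f_{n+1}` is
nondecreasing, that `f_{n+1} (M_n) = (α_{n+1} - α_n) / (α_{n+1} γ_n - α_n γ_{n+1})`, and the cross-ratio
inequality. Then `g_{n+2} = f_{n+2} (g_{n+1}) ≤ f_{n+1} (g_{n+1}) ≤ f_{n+1} (g_n) = g_{n+1}`.
-/

section

variable {α γ : ℕ → ℝ} {k : ℕ} {x : ℝ}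

noncomputable def ratioStep (α γ : ℕ → ℝ) (k : ℕ) (x : ℝ) : ℝ :=
  1 / γ k * (1 - α k / x)

noncomputable def crossPoint (α γ : ℕ → ℝ) (k : ℕ) : ℝ :=
  (α (k + 1) * γ k - α k * γ (k + 1)) / (γ k - γ (k + 1))

theorem ratioStep_zero (hα0 : α 0 = 0) (x : ℝ) : ratioStep α γ 0 x = 1 / γ 0 := by
  simp [ratioStep, hα0]

theorem monotoneOn_ratioStep (hα : 0 ≤ α k) (hγ : 0 < γ k) :
    MonotoneOn (ratioStep α γ k) (Set.Ioi 0) := by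
  intro x hx y _ hxy
  unfold ratioStep
  gcongr

theorem one_le_ratioStep (hα : 0 ≤ α k) (hγ : 0 < γ k) (hsum : α k + γ k ≤ 1) (hx : 1 ≤ x) :
    1 ≤ ratioStep α γ k x := by
  have hdiv : α k / x ≤ α k := div_le_self hα hx
  rw [ratioStep, one_div_mul_eq_div, le_div_iff₀ hγ]
  linarith

theorem cross_numerator_pos (hα : 0 ≤ α k) (hαk : α k < α (k + 1)) (hγ : 0 < γ (k + 1))
    (hγk : γ (k + 1) < γ k) : 0 < α (k + 1) * γ k - α k * γ (k + 1) := by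
  nlinarith

theorem crossPoint_pos (hα : 0 ≤ α k) (hαk : α k < α (k + 1)) (hγ : 0 < γ (k + 1))
    (hγk : γ (k + 1) < γ k) : 0 < crossPoint α γ k :=
  div_pos (cross_numerator_pos hα hαk hγ hγk) (sub_pos.mpr hγk)

theorem one_div_le_crossPoint_zero (hα0 : α 0 = 0) (hγ : 0 < γ 0) (hγ01 : γ 1 < γ 0)
    (hinit : γ 0 - γ 1 ≤ α 1 * γ 0 ^ 2) : 1 / γ 0 ≤ crossPoint α γ 0 := by
  rw [crossPoint, hα0, zero_mul, sub_zero, div_le_div_iff₀ hγ (sub_pos.2 hγ01)]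
  linarith

theorem ratioStep_succ_le (hγ : 0 < γ (k + 1)) (hγk : γ (k + 1) < γ k) (hx : 0 < x)
    (hxM : x ≤ crossPoint α γ k) : ratioStep α γ (k + 1) x ≤ ratioStep α γ k x := by
  have hγk' : 0 < γ k := hγ.trans hγk
  rw [crossPoint, le_div_iff₀ (sub_pos.mpr hγk)] at hxM
  unfold ratioStep
  rw [one_div_mul_eq_div, one_div_mul_eq_div, div_le_div_iff₀ hγ hγk', one_sub_div hx.ne',
    one_sub_div hx.ne', div_mul_eq_mul_div, div_mul_eq_mul_div, div_le_div_iff_of_pos_right hx]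
  nlinarith

theorem ratioStep_succ_crossPoint (hα : 0 ≤ α k) (hαk : α k < α (k + 1)) (hγ : 0 < γ (k + 1))
    (hγk : γ (k + 1) < γ k) :
    ratioStep α γ (k + 1) (crossPoint α γ k) =
      (α (k + 1) - α k) / (α (k + 1) * γ k - α k * γ (k + 1)) := by
  have hD := (cross_numerator_pos hα hαk hγ hγk).ne'
  unfold ratioStep crossPoint
  rw [div_div_eq_mul_div, one_sub_div hD, one_div_mul_eq_div, div_div,
    div_eq_div_iff (mul_ne_zero hD hγ.ne') hD]
  ring

theorem ratioStep_succ_le_of_le_crossPoint (hα : 0 ≤ α k) (hαk : α k < α (k + 1))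
    (hγ : 0 < γ (k + 1)) (hγk : γ (k + 1) < γ k) (hx : 0 < x) (hxM : x ≤ crossPoint α γ k) :
    ratioStep α γ (k + 1) x ≤ (α (k + 1) - α k) / (α (k + 1) * γ k - α k * γ (k + 1)) := by
  rw [← ratioStep_succ_crossPoint hα hαk hγ hγk]
  exact monotoneOn_ratioStep (hα.trans hαk.le) hγ hx (crossPoint_pos hα hαk hγ hγk) hxM

end

theorem stmt_2_general (α γ g : ℕ → ℝ)
    (hα0 : α 0 = 0)
    (hαmono : ∀ n, α n < α (n + 1))
    (hγpos : ∀ n, 0 < γ n)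
    (hγmono : ∀ n, γ (n + 1) < γ n)
    (hsum : ∀ n, α n + γ n ≤ 1)
    (hcross : ∀ n ≥ 1,
      (α n - α (n - 1)) / (α n * γ (n - 1) - α (n - 1) * γ n) ≤
        (α (n + 1) * γ n - α n * γ (n + 1)) / (γ n - γ (n + 1)))
    (hinit : γ 0 - γ 1 ≤ α 1 * (γ 0) ^ 2)
    (hg0 : g 0 = 1 / γ 0)
    (hg : ∀ n ≥ 1, g n = (1 / γ n) * (1 - α n / g (n - 1))) :
    ∀ n, g (n + 1) ≤ g n := by
  have hαnn : ∀ n, 0 ≤ α n := fun n =>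
    hα0 ▸ (strictMono_nat_of_lt_succ hαmono).monotone (Nat.zero_le n)
  have hrec : ∀ n, g (n + 1) = ratioStep α γ (n + 1) (g n) := fun n => hg (n + 1) n.succ_pos
  have hbounds : ∀ n, 1 ≤ g n ∧ g n ≤ crossPoint α γ n := by
    intro n
    induction n with
    | zero =>
      rw [hg0]
      exact ⟨one_le_one_div (hγpos 0) (by linarith [hsum 0]),
        one_div_le_crossPoint_zero hα0 (hγpos 0) (hγmono 0) hinit⟩
    | succ n ih =>
      refine ⟨hrec n ▸ one_le_ratioStep (hαnn _) (hγpos _) (hsum _) ih.1, ?_⟩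
      rw [hrec n]
      exact (ratioStep_succ_le_of_le_crossPoint (hαnn n) (hαmono n) (hγpos _) (hγmono n)
        (one_pos.trans_le ih.1) ih.2).trans (hcross (n + 1) n.succ_pos)
  have hgpos : ∀ n, 0 < g n := fun n => one_pos.trans_le (hbounds n).1
  have hstep : ∀ n, ratioStep α γ (n + 1) (g n) ≤ ratioStep α γ n (g n) := fun n =>
    ratioStep_succ_le (hγpos _) (hγmono n) (hgpos n) (hbounds n).2
  intro n
  induction n with
  | zero => exact (hrec 0).trans_le ((hstep 0).trans_eq (by rw [ratioStep_zero hα0, hg0]))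
  | succ n ih =>
    calc g (n + 2) = ratioStep α γ (n + 2) (g (n + 1)) := hrec _
      _ ≤ ratioStep α γ (n + 1) (g (n + 1)) := hstep _
      _ ≤ ratioStep α γ (n + 1) (g n) := monotoneOn_ratioStep (hαnn _) (hγpos _)
          (hgpos (n + 1)) (hgpos n) ih
      _ = g (n + 1) := (hrec n).symm

theorem stmt_2 (α γ g : ℕ → ℝ)
    (hα0 : α 0 = 0)
    (hαpos : ∀ n ≥ 1, 0 < α n)
    (hαmono : ∀ n, α n < α (n + 1))
    (hγpos : ∀ n, 0 < γ n)
    (hγmono : ∀ n, γ (n + 1) < γ n)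
    (hsum : ∀ n, α n + γ n ≤ 1)
    (hcross : ∀ n ≥ 1,
      (α n - α (n - 1)) / (α n * γ (n - 1) - α (n - 1) * γ n) ≤
        (α (n + 1) * γ n - α n * γ (n + 1)) / (γ n - γ (n + 1)))
    (hinit : γ 0 - γ 1 ≤ α 1 * (γ 0) ^ 2)
    (hg0 : g 0 = 1 / γ 0)
    (hg : ∀ n ≥ 1, g n = (1 / γ n) * (1 - α n / g (n - 1))) :
    ∀ n, g (n + 1) ≤ g n :=
  stmt_2_general α γ g hα0 hαmono hγpos hγmono hsum hcross hinit hg0 hg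
end

section
/- Let α ≥ γ > 0, δ_0 > δ_1 > 0 with α δ_0 ≤ 1/2. Set γ_0 = 1/2 + γ δ_0, γ_1 = 1/2 + γ δ_1, α_1 = 1/2 - α δ_1. Then γ_0 - γ_1 ≤ α_1 γ_0². -/
theorem stmt_8 (α γ δ₀ δ₁ : ℝ)
    (hαγ : γ ≤ α) (hγ : 0 < γ) (hδ : δ₁ < δ₀) (hδ1 : 0 < δ₁)
    (hαδ : α * δ₀ ≤ 1 / 2) :
    (1 / 2 + γ * δ₀) - (1 / 2 + γ * δ₁) ≤
      (1 / 2 - α * δ₁) * (1 / 2 + γ * δ₀) ^ 2 := by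
  have hα : 0 < α := hγ.trans_le hαγ
  have h1 : α * δ₁ ≤ 1 / 2 := ((mul_lt_mul_of_pos_left hδ hα).le).trans hαδ
  nlinarith [sq_nonneg (1/2 - γ*δ₀), mul_pos hγ hδ1, mul_pos hγ (hδ1.trans hδ),
    mul_nonneg (sub_nonneg.2 h1) (sq_nonneg (1/2 - γ*δ₀)),
    mul_pos hα hδ1, mul_lt_mul_of_pos_left hδ hγ]
end
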